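/- Let F(x,p) = (σ(x), f_x(p)) and G(x,p) = (σ(x), g_x(p)) be two skew products over the same base σ: Ω → Ω, conjugated by a fiber-bundle map H(x,p) = (x, h_x(p)) where each h_x: S¹ → S¹ is a γ-Hölder homeomorphism with uniform constant L (so G = H^{-1} ∘ F ∘ H). Then for all (x,p), if λ_con(G, x, p) ≤ 0 then λ_con(F, x, h_x(p)) ≤ γ · λ_con(G, x, p). -/

import Mathlib

open Filter

/-- Iterates `f^n_x = f_{σ^{n-1} x} ∘ ⋯ ∘ f_x` of a cocycle. -/
def cocycleIter {Ω : Type*} (σ : Ω → Ω) (f : Ω → UnitAddCircle → UnitAddCircle) :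
    ℕ → Ω → UnitAddCircle → UnitAddCircle
  | 0, _, p => p
  | n + 1, x, p => cocycleIter σ f n (σ x) (f x p)

/-- The pointwise exponent of contraction of the cocycle at `(x, p)`. -/
noncomputable def lamCon {Ω : Type*} [MetricSpace Ω] (σ : Ω → Ω)
    (f : Ω → UnitAddCircle → UnitAddCircle) (x : Ω) (p : UnitAddCircle) : EReal :=
  limsup (fun q : UnitAddCircle =>
      limsup (fun n : ℕ =>
        ((Real.log (dist (cocycleIter σ f n x p) (cocycleIter σ f n x q)) / n : ℝ) : EReal))
      atTop)
    (nhdsWithin p {p}ᶜ)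

/-- Multiplication by a positive real constant as an order isomorphism of `EReal`. -/
noncomputable def erealMulIso (γ : ℝ) (hγ : 0 < γ) : EReal ≃o EReal where
  toFun a := (γ : EReal) * a
  invFun a := ((γ⁻¹ : ℝ) : EReal) * a
  left_inv a := by
    show ((γ⁻¹ : ℝ) : EReal) * ((γ : EReal) * a) = a
    rw [← mul_assoc, ← EReal.coe_mul, inv_mul_cancel₀ hγ.ne', EReal.coe_one, one_mul]
  right_inv a := by
    show (γ : EReal) * (((γ⁻¹ : ℝ) : EReal) * a) = a
    rw [← mul_assoc, ← EReal.coe_mul, mul_inv_cancel₀ hγ.ne', EReal.coe_one, one_mul]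
  map_rel_iff' := by
    intro a b
    show (γ : EReal) * a ≤ (γ : EReal) * b ↔ a ≤ b
    have hb : (0:EReal) < ((γ⁻¹ : ℝ) : EReal) := by exact_mod_cast inv_pos.2 hγ
    have := (EReal.strictMono_div_right_of_pos hb (by simp)).le_iff_le (a := a) (b := b)
    have hd : ∀ c : EReal, c / ((γ⁻¹ : ℝ) : EReal) = (γ : EReal) * c := by
      intro c
      show c * (((γ⁻¹ : ℝ) : EReal))⁻¹ = _
      rw [← EReal.coe_inv, inv_inv, mul_comm]
    rw [hd, hd] at this
    exact this

lemma limsup_map_aux {α β : Type*} (u : β → EReal) (m : α → β) (l : Filter α) :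
    limsup u (Filter.map m l) = limsup (fun a => u (m a)) l := by
  show Filter.limsSup (Filter.map u (Filter.map m l)) = _
  rw [Filter.map_map]
  rfl

/-- If two skew products `F` and `G` over `σ` are conjugated by a fiber-bundle map whose fiber
maps `h_x` are uniformly `γ`-Hölder homeomorphisms with constant `L`, then whenever
`λ_con(G,x,p) ≤ 0`, we have `λ_con(F, x, h_x p) ≤ γ · λ_con(G, x, p)`. -/
theorem lamCon_conjugated_holder {Ω : Type*} [MetricSpace Ω] [CompactSpace Ω]
    (σ : Ω → Ω) (hσ : Continuous σ)
    (f g h : Ω → UnitAddCircle → UnitAddCircle)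
    (hfb : ∀ x, Function.Bijective (f x)) (hgb : ∀ x, Function.Bijective (g x))
    (hhb : ∀ x, Function.Bijective (h x))
    (L γ : ℝ) (hL : 0 < L) (hγ₀ : 0 < γ) (hγ₁ : γ ≤ 1)
    (hHolder : ∀ x, ∀ u v : UnitAddCircle, dist (h x u) (h x v) ≤ L * dist u v ^ γ)
    (hconj : ∀ x, ∀ u : UnitAddCircle, f x (h x u) = h (σ x) (g x u))
    (x : Ω) (p : UnitAddCircle)
    (hle : lamCon σ g x p ≤ 0) :
    lamCon σ f x (h x p) ≤ (γ : EReal) * lamCon σ g x p := by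
  -- continuity of the fiber maps
  have hhc : ∀ y, Continuous (h y) := by
    intro y
    rw [Metric.continuous_iff]
    intro b ε hε
    refine ⟨(ε / L) ^ (γ⁻¹ : ℝ), Real.rpow_pos_of_pos (div_pos hε hL) _, fun a hab => ?_⟩
    have h1 : dist (h y a) (h y b) ≤ L * dist a b ^ γ := hHolder y a b
    have h2 : dist a b ^ γ < ((ε / L) ^ (γ⁻¹ : ℝ)) ^ γ :=
      Real.rpow_lt_rpow dist_nonneg hab hγ₀
    have h3 : ((ε / L) ^ (γ⁻¹ : ℝ)) ^ γ = ε / L := by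
      rw [← Real.rpow_mul (div_pos hε hL).le, inv_mul_cancel₀ hγ₀.ne', Real.rpow_one]
    have h4 : L * (ε / L) = ε := by field_simp
    calc dist (h y a) (h y b) ≤ L * dist a b ^ γ := h1
      _ < L * ((ε / L) ^ (γ⁻¹ : ℝ)) ^ γ := by
          exact mul_lt_mul_of_pos_left h2 hL
      _ = ε := by rw [h3, h4]
  -- conjugacy of iterates
  have hiter : ∀ n (y : Ω) (u : UnitAddCircle),
      cocycleIter σ f n y (h y u) = h (σ^[n] y) (cocycleIter σ g n y u) := by
    intro n
    induction n with
    | zero => intro y u; rfl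
    | succ n ih =>
      intro y u
      show cocycleIter σ f n (σ y) (f y (h y u)) = _
      rw [hconj, ih (σ y) (g y u)]
      rfl
  -- injectivity of g-iterates
  have hgInj : ∀ n (y : Ω), Function.Injective (cocycleIter σ g n y) := by
    intro n
    induction n with
    | zero => intro y; exact fun a b hab => hab
    | succ n ih =>
      intro y a b hab
      exact (hgb y).injective (ih (σ y) hab)
  -- key pointwise inequality between the inner limsups
  have key : ∀ q : UnitAddCircle, q ≠ p →
      limsup (fun n : ℕ =>
        ((Real.log (dist (cocycleIter σ f n x (h x p)) (cocycleIter σ f n x (h x q))) / n : ℝ)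
          : EReal)) atTop
      ≤ (γ : EReal) * limsup (fun n : ℕ =>
        ((Real.log (dist (cocycleIter σ g n x p) (cocycleIter σ g n x q)) / n : ℝ)
          : EReal)) atTop := by
    intro q hq
    set B : ℕ → ℝ := fun n => Real.log (dist (cocycleIter σ g n x p) (cocycleIter σ g n x q)) / n
      with hB
    set A : ℕ → ℝ := fun n =>
      Real.log (dist (cocycleIter σ f n x (h x p)) (cocycleIter σ f n x (h x q))) / n with hA
    set C : ℕ → ℝ := fun n => Real.log L / n with hC
    have hpt : ∀ n : ℕ, ((A n : ℝ) : EReal) ≤ ((C n : ℝ) : EReal) + (γ : EReal) * (B n : EReal) := by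
      intro n
      rcases Nat.eq_zero_or_pos n with rfl | hn
      · simp [hA, hB, hC]
      · have hdG : 0 < dist (cocycleIter σ g n x p) (cocycleIter σ g n x q) := by
          rw [dist_pos]
          exact fun hEq => hq (hgInj n x hEq).symm
        set dG := dist (cocycleIter σ g n x p) (cocycleIter σ g n x q)
        have hdF : 0 < dist (cocycleIter σ f n x (h x p)) (cocycleIter σ f n x (h x q)) := by
          rw [hiter n x p, hiter n x q, dist_pos]
          intro hEq
          exact hq (hgInj n x ((hhb (σ^[n] x)).injective hEq)).symm
        have hbound : dist (cocycleIter σ f n x (h x p)) (cocycleIter σ f n x (h x q))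
            ≤ L * dG ^ γ := by
          rw [hiter n x p, hiter n x q]
          exact hHolder _ _ _
        have hlog : Real.log (dist (cocycleIter σ f n x (h x p)) (cocycleIter σ f n x (h x q)))
            ≤ Real.log L + γ * Real.log dG := by
          calc Real.log (dist (cocycleIter σ f n x (h x p)) (cocycleIter σ f n x (h x q)))
              ≤ Real.log (L * dG ^ γ) := Real.log_le_log hdF hbound
            _ = Real.log L + γ * Real.log dG := by
                rw [Real.log_mul hL.ne' (Real.rpow_pos_of_pos hdG γ).ne', Real.log_rpow hdG]
        have hreal : A n ≤ C n + γ * B n := by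
          have hn' : (0:ℝ) < (n:ℝ) := by exact_mod_cast hn
          have h5 : A n ≤ (Real.log L + γ * Real.log dG) / n :=
            div_le_div_of_nonneg_right hlog hn'.le
          calc A n ≤ (Real.log L + γ * Real.log dG) / n := h5
            _ = C n + γ * B n := by
                simp only [hB, hC]
                field_simp
                rfl
        calc ((A n : ℝ) : EReal) ≤ ((C n + γ * B n : ℝ) : EReal) := by exact_mod_cast hreal
          _ = ((C n : ℝ) : EReal) + (γ : EReal) * (B n : EReal) := by
              rw [EReal.coe_add, EReal.coe_mul]
    have hCtend : Tendsto (fun n : ℕ => ((C n : ℝ) : EReal)) atTop (nhds (0 : EReal)) := by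
      have : Tendsto C atTop (nhds (0 : ℝ)) := tendsto_const_div_atTop_nhds_zero_nat _
      have := EReal.tendsto_coe.2 this
      simpa using this
    have hClimsup : limsup (fun n : ℕ => ((C n : ℝ) : EReal)) atTop = 0 := hCtend.limsup_eq
    have hmul : limsup (fun n : ℕ => (γ : EReal) * (B n : EReal)) atTop
        = (γ : EReal) * limsup (fun n : ℕ => ((B n : ℝ) : EReal)) atTop :=
      ((erealMulIso γ hγ₀).limsup_apply (u := fun n : ℕ => ((B n : ℝ) : EReal))).symm
    calc limsup (fun n : ℕ => ((A n : ℝ) : EReal)) atTop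
        ≤ limsup (fun n : ℕ => ((C n : ℝ) : EReal) + (γ : EReal) * (B n : EReal)) atTop := by
          exact limsup_le_limsup (Eventually.of_forall hpt)
      _ ≤ limsup (fun n : ℕ => ((C n : ℝ) : EReal)) atTop
            + limsup (fun n : ℕ => (γ : EReal) * (B n : EReal)) atTop := by
          apply EReal.limsup_add_le
          · left; rw [hClimsup]; exact (by simp : (0:EReal) ≠ ⊥)
          · left; rw [hClimsup]; exact (by simp : (0:EReal) ≠ ⊤)
      _ = (γ : EReal) * limsup (fun n : ℕ => ((B n : ℝ) : EReal)) atTop := by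
          rw [hClimsup, hmul, zero_add]
  -- the fiber map as a homeomorphism
  let e : UnitAddCircle ≃ₜ UnitAddCircle :=
    Continuous.homeoOfEquivCompactToT2 (f := Equiv.ofBijective (h x) (hhb x)) (hhc x)
  have hep : e p = h x p := rfl
  have hfilt : nhdsWithin (h x p) {h x p}ᶜ = Filter.map e (nhdsWithin p {p}ᶜ) := by
    rw [← hep]
    exact (e.map_punctured_nhds_eq p).symm
  -- conclude
  unfold lamCon
  rw [hfilt, limsup_map_aux]
  have hmul2 : limsup (fun q : UnitAddCircle => (γ : EReal) * limsup (fun n : ℕ =>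
        ((Real.log (dist (cocycleIter σ g n x p) (cocycleIter σ g n x q)) / n : ℝ) : EReal))
        atTop) (nhdsWithin p {p}ᶜ)
      = (γ : EReal) * limsup (fun q : UnitAddCircle => limsup (fun n : ℕ =>
        ((Real.log (dist (cocycleIter σ g n x p) (cocycleIter σ g n x q)) / n : ℝ) : EReal))
        atTop) (nhdsWithin p {p}ᶜ) :=
    ((erealMulIso γ hγ₀).limsup_apply).symm
  rw [← hmul2]
  refine limsup_le_limsup ?_
  have hev : ∀ᶠ q in nhdsWithin p {p}ᶜ, q ≠ p := by
    have := self_mem_nhdsWithin (a := p) (s := ({p}ᶜ : Set UnitAddCircle))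
    filter_upwards [this] with q hq
    exact hq
  filter_upwards [hev] with q hq
  have heq : e q = h x q := rfl
  rw [heq]
  exact key q hq
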